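/- arXiv:cond-mat/0409710 — 2 statements merged into one kernel-verified Lean document; each statement's English description precedes it below -/
import Mathlib

section
/- Let p > 0, N > 0, α > 0, β > 0 be real numbers, and let g̃(x) = ((1 - 1/(p α² N²))·e^{-2 p α N x} + 1/(p α² N²))^{-1} for x in a domain where the bracketed expression is positive. Then the function f̃(x) = ((2 p N + β)/(2p))·(1 - 1/(p α² N²) + e^{2 p α N x}/(p α² N²))^{-p α N} - β/(2p) satisfies f̃(0) = N and solves the linear differential equation f̃'(x) = -2 p · g̃(x) · f̃(x) - β · g̃(x) on that domain. -/
/-!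
With `u(x) = a + b·e^{kx}` one has `(a·e^{-kx} + b)⁻¹ = e^{kx}/u(x)`, so the chain rule gives
`(u^s)' = s·k·b·(a·e^{-kx} + b)⁻¹·u^s`. For `a = 1 - 1/(pα²N²)`, `b = 1/(pα²N²)`, `k = 2pαN` and
`s = -pαN` the factor `s·k·b` is `-2p` and `(a·e^{-kx} + b)⁻¹ = g̃(x)`, hence
`f̃' = -2p·g̃·(f̃ + β/(2p))`. At `x = 0` the base `u(0) = a + b` equals `1`.
-/

open Real

theorem hasDerivAt_rpow_add_mul_exp (a b k s x : ℝ) (hx : 0 < a * exp (-(k * x)) + b) :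
    HasDerivAt (fun y => (a + b * exp (k * y)) ^ s)
      (s * k * b * (a * exp (-(k * x)) + b)⁻¹ * (a + b * exp (k * x)) ^ s) x := by
  have hu : a + b * exp (k * x) = exp (k * x) * (a * exp (-(k * x)) + b) := by
    rw [exp_neg]; field_simp
  have hu_pos : 0 < a + b * exp (k * x) := hu ▸ mul_pos (exp_pos _) hx
  have hlin : HasDerivAt (fun y => a + b * exp (k * y)) (b * (exp (k * x) * k)) x :=
    (((hasDerivAt_id x).const_mul k).exp.const_mul b).const_add a |>.congr_deriv (by simp)
  convert hlin.rpow_const (p := s) (Or.inl hu_pos.ne') using 1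
  rw [rpow_sub_one hu_pos.ne', hu]
  field_simp

theorem ftilde_solves_linear_ode_general (p N α β : ℝ) (hp : 0 < p) (hN : 0 < N)
    (hα : 0 < α) (gt ft : ℝ → ℝ)
    (hgt : ∀ x : ℝ, gt x =
      ((1 - 1 / (p * α ^ 2 * N ^ 2)) * Real.exp (-2 * p * α * N * x)
        + 1 / (p * α ^ 2 * N ^ 2))⁻¹)
    (hft : ∀ x : ℝ, ft x =
      (2 * p * N + β) / (2 * p) *
        (1 - 1 / (p * α ^ 2 * N ^ 2)
          + Real.exp (2 * p * α * N * x) / (p * α ^ 2 * N ^ 2)) ^ (-(p * α * N))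
        - β / (2 * p)) :
    ft 0 = N ∧
    (∀ x : ℝ,
      0 < (1 - 1 / (p * α ^ 2 * N ^ 2)) * Real.exp (-2 * p * α * N * x)
          + 1 / (p * α ^ 2 * N ^ 2) →
      HasDerivAt ft (-2 * p * gt x * ft x - β * gt x) x) := by
  have hft' : ft = fun y => (2 * p * N + β) / (2 * p) *
      (1 - 1 / (p * α ^ 2 * N ^ 2) + 1 / (p * α ^ 2 * N ^ 2) * exp (2 * p * α * N * y)) ^
        (-(p * α * N)) - β / (2 * p) := by
    ext y; rw [hft, one_div_mul_eq_div]
  refine ⟨?_, fun x hx => ?_⟩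
  · rw [hft, mul_zero, exp_zero, sub_add_cancel, one_rpow]
    field_simp
    ring
  have hexp : -2 * p * α * N * x = -(2 * p * α * N * x) := by ring
  rw [hexp] at hx
  have h := ((hasDerivAt_rpow_add_mul_exp _ _ _ (-(p * α * N)) x hx).const_mul
    ((2 * p * N + β) / (2 * p))).sub_const (β / (2 * p))
  rw [← hft'] at h
  refine h.congr_deriv ?_
  rw [hgt, hexp, hft]
  field_simp
  ring

/-- For `p, N, α, β > 0`, with
`g̃(x) = ((1 - 1/(pα²N²))·e^{-2pαNx} + 1/(pα²N²))⁻¹`, the function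
`f̃(x) = ((2pN + β)/(2p))·(1 - 1/(pα²N²) + e^{2pαNx}/(pα²N²))^{-pαN} - β/(2p)`
satisfies `f̃(0) = N` and solves the linear differential equation
`f̃' = -2p·g̃·f̃ - β·g̃` on the domain where the bracketed expression defining `g̃`
is positive. -/
theorem ftilde_solves_linear_ode (p N α β : ℝ) (hp : 0 < p) (hN : 0 < N)
    (hα : 0 < α) (hβ : 0 < β) (gt ft : ℝ → ℝ)
    (hgt : ∀ x : ℝ, gt x =
      ((1 - 1 / (p * α ^ 2 * N ^ 2)) * Real.exp (-2 * p * α * N * x)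
        + 1 / (p * α ^ 2 * N ^ 2))⁻¹)
    (hft : ∀ x : ℝ, ft x =
      (2 * p * N + β) / (2 * p) *
        (1 - 1 / (p * α ^ 2 * N ^ 2)
          + Real.exp (2 * p * α * N * x) / (p * α ^ 2 * N ^ 2)) ^ (-(p * α * N))
        - β / (2 * p)) :
    ft 0 = N ∧
    (∀ x : ℝ,
      0 < (1 - 1 / (p * α ^ 2 * N ^ 2)) * Real.exp (-2 * p * α * N * x)
          + 1 / (p * α ^ 2 * N ^ 2) →
      HasDerivAt ft (-2 * p * gt x * ft x - β * gt x) x) :=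
  ftilde_solves_linear_ode_general p N α β hp hN hα gt ft hgt hft
end

section
/- Let c > 0, α > 0, β > 0 and ε ∈ (0,1) be real numbers, and for p = c·N^{-1-ε} let x̃*(N) = (1/(2 α p N))·ln( [ ((2 p N + β)/(p N + β))^{1/(p α N)} - 1 ] · p α² N² + 1 ). Then lim_{N→∞} ( 2 α c · x̃*(N)/N^{ε} - (1-ε)·ln N ) = ln( (e^{1/(α β)} - 1)·c·α² ). In particular x̃*(N) grows like (N^{ε}/(2 α c))·((1-ε) ln N + O(1)) as N → ∞. -/
open Filter Topology Real

/-!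
With `t = pN = c N^{-ε} → 0⁺`, the prefactor `2αc / (N^ε · 2αpN)` is exactly `1`, so
`2αc x̃*/N^ε = log((g(t) - 1) c α² N^{1-ε} + 1)` with `g(t) = ((2t+β)/(t+β))^{1/(αt)}`.
Subtracting `(1-ε) log N` leaves `log((g(t) - 1) c α² + N^{ε-1})`. Since `(2t+β)/(t+β)` has
value `1` and derivative `1/β` at `0`, `g(t) → e^{1/(αβ)}` (as `(1+s)^{1/s} → e`), while
`N^{ε-1} → 0` because `ε < 1`.
-/

lemma tendsto_rpow_div_of_hasDerivAt {r : ℝ → ℝ} {d : ℝ} (hr : HasDerivAt r d 0)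
    (hr0 : r 0 = 1) (a : ℝ) :
    Tendsto (fun s => r s ^ (a / s)) (𝓝[≠] 0) (𝓝 (exp (a * d))) := by
  have hlog : HasDerivAt (fun s => log (r s)) d 0 := by
    simpa [hr0] using hr.log (by simp [hr0])
  have hslope := (continuous_exp.tendsto _).comp
    ((hasDerivAt_iff_tendsto_slope.mp hlog).const_mul a)
  have hpos : ∀ᶠ s in 𝓝[≠] (0 : ℝ), 0 < r s :=
    nhdsWithin_le_nhds (hr.continuousAt.eventually (lt_mem_nhds (by simp [hr0])))
  refine hslope.congr' ?_
  filter_upwards [hpos] with s hs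
  simp only [Function.comp_apply, slope_def_field, hr0, log_one, rpow_def_of_pos hs]
  ring_nf

lemma tendsto_two_mul_add_div_add_rpow_one_div_mul {β : ℝ} (hβ : β ≠ 0) (α : ℝ) :
    Tendsto (fun t => ((2 * t + β) / (t + β)) ^ (1 / (α * t))) (𝓝[>] 0)
      (𝓝 (exp (1 / (α * β)))) := by
  have hr : HasDerivAt (fun t : ℝ => (2 * t + β) / (t + β)) (1 / β) 0 :=
    ((((hasDerivAt_id' 0).const_mul 2).add_const β).div ((hasDerivAt_id' 0).add_const β)
      (by simp [hβ])).congr_deriv (by simp; field_simp; ring)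
  have := (tendsto_rpow_div_of_hasDerivAt hr (by simp [hβ]) (1 / α)).mono_left
    (nhdsGT_le_nhdsNE 0)
  convert this using 2 with t
  · rw [div_div]
  · rw [one_div_mul_one_div]

lemma tendsto_const_mul_rpow_neg_nhdsGT {c ε : ℝ} (hc : 0 < c) (hε : 0 < ε) :
    Tendsto (fun N : ℝ => c * N ^ (-ε)) atTop (𝓝[>] 0) := by
  refine tendsto_nhdsWithin_iff.mpr
    ⟨by simpa using (tendsto_rpow_neg_atTop hε).const_mul c, ?_⟩
  filter_upwards [eventually_gt_atTop 0] with N hN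
  exact mul_pos hc (rpow_pos_of_pos hN _)

lemma scaled_crossover_bound_sub_log_eq {c α β ε N : ℝ} (hc : c ≠ 0) (hα : α ≠ 0)
    (hN : 0 < N)
    (hne : (((2 * (c * N ^ (-ε)) + β) / (c * N ^ (-ε) + β)) ^ (1 / (α * (c * N ^ (-ε))))
      - 1) * (c * α ^ 2) + N ^ (ε - 1) ≠ 0) :
    2 * α * c * (1 / (2 * α * (c * N ^ (-(1 + ε))) * N) *
        log ((((2 * (c * N ^ (-(1 + ε))) * N + β) / ((c * N ^ (-(1 + ε))) * N + β))
          ^ (1 / ((c * N ^ (-(1 + ε))) * α * N)) - 1)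
            * ((c * N ^ (-(1 + ε))) * α ^ 2 * N ^ (2:ℕ)) + 1)) / N ^ ε - (1 - ε) * log N
      = log ((((2 * (c * N ^ (-ε)) + β) / (c * N ^ (-ε) + β)) ^ (1 / (α * (c * N ^ (-ε))))
      - 1) * (c * α ^ 2) + N ^ (ε - 1)) := by
  set t := c * N ^ (-ε) with ht
  have hp : c * N ^ (-(1 + ε)) = t / N := by
    rw [ht, neg_add, rpow_add hN, rpow_neg_one]
    ring
  have hct : c = t * N ^ ε := by
    rw [ht, rpow_neg hN.le]
    field_simp
  have htN : t / N * N = t := div_mul_cancel₀ t hN.ne'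
  have hktN : ∀ k, k * (t / N) * N = k * t := fun k => by rw [mul_assoc, htN]
  have htkN : ∀ k, t / N * k * N = k * t := fun k => by rw [mul_right_comm, htN, mul_comm]
  simp only [hp, htN, hktN, htkN]
  generalize ((2 * t + β) / (t + β)) ^ (1 / (α * t)) - 1 = u at hne ⊢
  have harg : u * (t / N * α ^ 2 * N ^ (2:ℕ)) + 1
      = (u * (c * α ^ 2) + N ^ (ε - 1)) * N ^ (1 - ε) := by
    have htN2 : t / N * N ^ (2:ℕ) = c * N ^ (1 - ε) := by
      rw [ht, sub_eq_neg_add, rpow_add_one hN.ne']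
      field_simp
    have hcancel : N ^ (ε - 1) * N ^ (1 - ε) = 1 := by
      rw [← rpow_add hN]
      simp
    linear_combination u * α ^ 2 * htN2 - hcancel
  have htne : t ≠ 0 := mul_ne_zero hc (rpow_pos_of_pos hN _).ne'
  rw [harg, log_mul hne (rpow_pos_of_pos hN _).ne', log_rpow hN, hct]
  field_simp
  ring

/-- For `c, α, β > 0`, `ε ∈ (0,1)` and `p = c·N^{-1-ε}`, the bound
`x̃*(N) = (1/(2αpN))·ln( [((2pN+β)/(pN+β))^{1/(pαN)} - 1]·pα²N² + 1 )` satisfies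
`lim_{N→∞} ( 2αc·x̃*(N)/N^ε - (1-ε)·ln N ) = ln( (e^{1/(αβ)} - 1)·c·α² )`,
i.e. `x̃*(N) ≈ (N^ε/(2αc))·((1-ε)·ln N + O(1))` — the intermediate crossover regime. -/
theorem xstar_crossover_scaling (c α β ε : ℝ) (hc : 0 < c) (hα : 0 < α) (hβ : 0 < β)
    (hε : ε ∈ Set.Ioo (0:ℝ) 1) (xstar : ℝ → ℝ)
    (hxstar : ∀ N : ℝ, 0 < N → xstar N =
      1 / (2 * α * (c * N ^ (-(1 + ε))) * N) *
        Real.log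
          ((((2 * (c * N ^ (-(1 + ε))) * N + β) / ((c * N ^ (-(1 + ε))) * N + β))
              ^ (1 / ((c * N ^ (-(1 + ε))) * α * N)) - 1)
            * ((c * N ^ (-(1 + ε))) * α ^ 2 * N ^ (2:ℕ)) + 1)) :
    Tendsto (fun N : ℝ => 2 * α * c * xstar N / N ^ ε - (1 - ε) * Real.log N)
      atTop (nhds (Real.log ((Real.exp (1 / (α * β)) - 1) * c * α ^ 2))) := by
  obtain ⟨hε0, hε1⟩ := hε
  have hK : 0 < (exp (1 / (α * β)) - 1) * c * α ^ 2 := by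
    have : 0 < exp (1 / (α * β)) - 1 := by simp; positivity
    positivity
  have hg := (tendsto_two_mul_add_div_add_rpow_one_div_mul hβ.ne' α).comp
    (tendsto_const_mul_rpow_neg_nhdsGT hc hε0)
  have hvanish : Tendsto (fun N : ℝ => N ^ (ε - 1)) atTop (𝓝 0) := by
    simpa using tendsto_rpow_neg_atTop (sub_pos.mpr hε1)
  have hlim := ((hg.sub_const 1).mul_const (c * α ^ 2)).add hvanish
  rw [add_zero, ← mul_assoc] at hlim
  refine (hlim.log hK.ne').congr' ?_
  filter_upwards [eventually_gt_atTop 0, hlim.eventually (eventually_gt_nhds hK)] with N hN hpos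
  rw [hxstar N hN, scaled_crossover_bound_sub_log_eq hc.ne' hα.ne' hN hpos.ne']
  rfl
end
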